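/- Let Ω := ℝ × (−1,1) ⊂ ℝ² and let u : ℝ² → [0,∞) be continuously differentiable, vanishing outside Ω, even in each variable (u(x₁,x₂) = u(−x₁,x₂) = u(x₁,−x₂)), and nonincreasing in each variable on the positive quadrant (if 0 ≤ x₁ ≤ X₁ and 0 ≤ x₂ ≤ X₂ < 1 then u(X₁,X₂) ≤ u(x₁,x₂)), with ∫_Ω |∇u(x)|² dx < ∞. Then for every (x₁,x₂) ∈ Ω with x₁ ≠ 0, u(x₁,x₂) ≤ (2/|x₁|)^{1/2} ( ∫_Ω |∇u(x)|² dx )^{1/2}. -/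

import Mathlib

/-!
Along a vertical segment `{t} × [b, 1]` the fundamental theorem of calculus and Cauchy–Schwarz give
`u(t,b)² ≤ (1 - b) ∫_b^1 |∂₂u(t,s)|² ds ≤ 2 ∫_{-1}^1 |∇u(t,s)|² ds`, because `u(t,1) = 0`.
Evenness reduces an arbitrary point to `a, b ≥ 0`, and we may assume `u(a,b) > 0`. For `0 < t < a`
monotonicity gives `0 < u(a,b) ≤ u(t,b)`; integrating over `t ∈ (0,a)` and using Fubini on `Ω`
yields `a u(a,b)² ≤ 2 ∫_Ω |∇u|²`.
-/

open MeasureTheory Real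

/-- The infinite planar strip `Ω = ℝ × (-1,1) ⊂ ℝ²`. -/
def strip : Set (EuclideanSpace ℝ (Fin 2)) := {x | x 1 ∈ Set.Ioo (-1 : ℝ) 1}

/-- The point `(a, b)` of `ℝ²` as an element of `EuclideanSpace ℝ (Fin 2)`. -/
noncomputable def pt (a b : ℝ) : EuclideanSpace ℝ (Fin 2) :=
  (WithLp.equiv 2 (Fin 2 → ℝ)).symm ![a, b]

open Set

theorem sq_intervalIntegral_le_mul_integral_sq {f : ℝ → ℝ} {b c : ℝ} (hbc : b ≤ c)
    (hf : ContinuousOn f (Icc b c)) :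
    (∫ s in b..c, f s) ^ 2 ≤ (c - b) * ∫ s in b..c, f s ^ 2 := by
  rcases hbc.eq_or_lt with rfl | hlt
  · simp
  have hcb : 0 < c - b := sub_pos.mpr hlt
  have hint : ∀ g : ℝ → ℝ, ContinuousOn g (Icc b c) → IntegrableOn g (uIoc b c) := fun g hg => by
    rw [uIoc_of_le hbc]; exact hg.integrableOn_Icc.mono_set Ioc_subset_Icc_self
  have hjensen : (⨍ s in b..c, f s) ^ 2 ≤ ⨍ s in b..c, f s ^ 2 :=
    (even_two.convexOn_pow (𝕜 := ℝ)).map_set_average_le (continuous_pow 2).continuousOn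
      isClosed_univ (by simpa using hcb.ne') (by simp) (by simp) (hint f hf) (hint _ (hf.pow 2))
  rw [interval_average_eq, interval_average_eq, smul_eq_mul, smul_eq_mul, mul_pow,
    inv_pow, ← div_eq_inv_mul, ← div_eq_inv_mul, div_le_div_iff₀ (by positivity) hcb] at hjensen
  nlinarith

theorem sq_sub_le_mul_integral_deriv_sq {g g' : ℝ → ℝ} {b c : ℝ} (hbc : b ≤ c)
    (hg : ∀ s ∈ Icc b c, HasDerivAt g (g' s) s) (hg' : ContinuousOn g' (Icc b c)) :
    (g c - g b) ^ 2 ≤ (c - b) * ∫ s in b..c, g' s ^ 2 := by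
  rw [← intervalIntegral.integral_eq_sub_of_hasDerivAt (by rwa [uIcc_of_le hbc])
    (hg'.intervalIntegrable_of_Icc hbc)]
  exact sq_intervalIntegral_le_mul_integral_sq hbc hg'

noncomputable def ptEquiv : (ℝ × ℝ) ≃ᵐ EuclideanSpace ℝ (Fin 2) :=
  MeasurableEquiv.finTwoArrow.symm.trans (MeasurableEquiv.toLp 2 (Fin 2 → ℝ))

lemma ptEquiv_apply (p : ℝ × ℝ) : ptEquiv p = pt p.1 p.2 := by
  ext i; fin_cases i <;> rfl

lemma measurePreserving_ptEquiv_strip :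
    MeasurePreserving ptEquiv (volume.prod (volume.restrict (Ioo (-1) 1)))
      (volume.restrict strip) := by
  have hmp : MeasurePreserving ptEquiv volume volume :=
    (EuclideanSpace.volume_preserving_symm_measurableEquiv_toLp (Fin 2)).symm.comp
      (volume_preserving_finTwoArrow ℝ).symm
  have hpre : ptEquiv ⁻¹' strip = univ ×ˢ Ioo (-1) 1 := by
    ext p; simp [strip, ptEquiv_apply, pt]
  have := hmp.restrict_preimage_emb ptEquiv.measurableEmbedding strip
  rwa [hpre, Measure.volume_eq_prod, ← Measure.prod_restrict, Measure.restrict_univ] at this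

theorem integrable_integral_strip_slice {f : EuclideanSpace ℝ (Fin 2) → ℝ}
    (hf : IntegrableOn f strip) :
    Integrable fun t => ∫ s in Ioo (-1) 1, f (pt t s) := by
  have := ((measurePreserving_ptEquiv_strip.integrable_comp_emb
    ptEquiv.measurableEmbedding).mpr hf).integral_prod_left
  simpa only [Function.comp_def, ptEquiv_apply] using this

theorem integral_integral_strip_slice {f : EuclideanSpace ℝ (Fin 2) → ℝ}
    (hf : IntegrableOn f strip) :
    ∫ t, ∫ s in Ioo (-1) 1, f (pt t s) = ∫ x in strip, f x := by
  rw [← measurePreserving_ptEquiv_strip.integral_comp ptEquiv.measurableEmbedding,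
    integral_prod (fun p => f (ptEquiv p)) ((measurePreserving_ptEquiv_strip.integrable_comp_emb
    ptEquiv.measurableEmbedding).mpr hf)]
  simp only [ptEquiv_apply]

lemma hasDerivAt_pt_right (t s : ℝ) : HasDerivAt (pt t) (pt 0 1) s := by
  have hline : pt t = fun s => pt t 0 + s • pt 0 1 := by
    funext s; ext i; fin_cases i <;> simp [pt]
  rw [hline]
  simpa using ((hasDerivAt_id s).smul_const (pt 0 1)).const_add (pt t 0)

lemma norm_pt_zero_one : ‖pt 0 1‖ = 1 := by
  simp [pt, EuclideanSpace.norm_eq, Fin.sum_univ_two]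

theorem sq_le_two_mul_integral_norm_fderiv_sq {u : EuclideanSpace ℝ (Fin 2) → ℝ}
    (hu : ContDiff ℝ 1 u) (hzero : ∀ x, x ∉ strip → u x = 0) (t : ℝ) {b : ℝ}
    (hb : b ∈ Icc (-1) 1) :
    u (pt t b) ^ 2 ≤ 2 * ∫ s in Ioo (-1) 1, ‖fderiv ℝ u (pt t s)‖ ^ 2 := by
  set Du : ℝ → _ := fun s => fderiv ℝ u (pt t s)
  have hDu : Continuous Du := (hu.continuous_fderiv one_ne_zero).comp
    (continuous_iff_continuousAt.mpr fun s => (hasDerivAt_pt_right t s).continuousAt)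
  have hderiv (s : ℝ) : HasDerivAt (fun s => u (pt t s)) (Du s (pt 0 1)) s :=
    (hu.differentiable one_ne_zero _).hasFDerivAt.comp_hasDerivAt s (hasDerivAt_pt_right t s)
  have hftc := sq_sub_le_mul_integral_deriv_sq hb.2 (fun s _ => hderiv s)
    (hDu.clm_apply continuous_const).continuousOn
  rw [hzero (pt t 1) (by simp [strip, pt]), zero_sub, neg_sq] at hftc
  have hpartial_le (s : ℝ) : Du s (pt 0 1) ^ 2 ≤ ‖Du s‖ ^ 2 := by
    have h := (Du s).le_opNorm (pt 0 1)
    rw [norm_pt_zero_one, mul_one] at h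
    exact sq_le_sq.mpr (by rwa [abs_norm])
  have hint : IntegrableOn (fun s => ‖Du s‖ ^ 2) (Icc (-1) 1) :=
    (hDu.norm.pow 2).integrableOn_Icc
  have hslice : ∫ s in b..1, ‖Du s‖ ^ 2 ≤ ∫ s in Ioo (-1) 1, ‖Du s‖ ^ 2 := by
    rw [intervalIntegral.integral_of_le hb.2, ← integral_Ioc_eq_integral_Ioo]
    exact setIntegral_mono_set (hint.mono_set Ioc_subset_Icc_self)
      (ae_of_all _ fun s => sq_nonneg _) (Ioc_subset_Ioc hb.1 le_rfl).eventuallyLE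
  calc u (pt t b) ^ 2 ≤ (1 - b) * ∫ s in b..1, Du s (pt 0 1) ^ 2 := hftc
    _ ≤ (1 - b) * ∫ s in b..1, ‖Du s‖ ^ 2 :=
      mul_le_mul_of_nonneg_left (intervalIntegral.integral_mono_on hb.2
        (((hDu.clm_apply continuous_const).pow 2).intervalIntegrable _ _)
        ((hDu.norm.pow 2).intervalIntegrable _ _) fun s _ => hpartial_le s) (by linarith [hb.2])
    _ ≤ 2 * ∫ s in Ioo (-1) 1, ‖Du s‖ ^ 2 :=
      mul_le_mul (by linarith [hb.1]) hslice
        (intervalIntegral.integral_nonneg hb.2 fun s _ => sq_nonneg _) zero_le_two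

theorem mul_sq_le_two_mul_integral_norm_fderiv_sq {u : EuclideanSpace ℝ (Fin 2) → ℝ}
    (hu : ContDiff ℝ 1 u) (hzero : ∀ x, x ∉ strip → u x = 0)
    (hE : IntegrableOn (fun x => ‖fderiv ℝ u x‖ ^ 2) strip) {a b : ℝ} (ha : 0 ≤ a)
    (hb : b ∈ Icc (-1) 1) (hu_nonneg : 0 ≤ u (pt a b))
    (hmono : ∀ t ∈ Ioo 0 a, u (pt a b) ≤ u (pt t b)) :
    a * u (pt a b) ^ 2 ≤ 2 * ∫ x in strip, ‖fderiv ℝ u x‖ ^ 2 := by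
  set F : ℝ → ℝ := fun t => ∫ s in Ioo (-1) 1, ‖fderiv ℝ u (pt t s)‖ ^ 2
  have hF : Integrable F := integrable_integral_strip_slice hE
  have hle (t : ℝ) (ht : t ∈ Ioo 0 a) : u (pt a b) ^ 2 ≤ 2 * F t :=
    (pow_le_pow_left₀ hu_nonneg (hmono t ht) 2).trans
      (sq_le_two_mul_integral_norm_fderiv_sq hu hzero t hb)
  calc a * u (pt a b) ^ 2 = u (pt a b) ^ 2 * volume.real (Ioo 0 a) := by
        rw [Real.volume_real_Ioo_of_le ha, sub_zero, mul_comm]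
    _ ≤ ∫ t in Ioo 0 a, 2 * F t :=
      setIntegral_ge_of_const_le_real measurableSet_Ioo (by simp) hle
        (hF.const_mul 2).integrableOn
    _ ≤ ∫ t, 2 * F t := setIntegral_le_integral (hF.const_mul 2)
        (ae_of_all _ fun t => mul_nonneg zero_le_two
          (setIntegral_nonneg measurableSet_Ioo fun s _ => sq_nonneg _))
    _ = 2 * ∫ x in strip, ‖fderiv ℝ u x‖ ^ 2 := by
      rw [integral_const_mul, integral_integral_strip_slice hE]

lemma apply_pt_abs_abs {u : EuclideanSpace ℝ (Fin 2) → ℝ}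
    (heven1 : ∀ a b : ℝ, u (pt (-a) b) = u (pt a b))
    (heven2 : ∀ a b : ℝ, u (pt a (-b)) = u (pt a b)) (a b : ℝ) :
    u (pt |a| |b|) = u (pt a b) := by
  rcases abs_choice a with ha | ha <;> rcases abs_choice b with hb | hb <;>
    simp only [ha, hb, heven1, heven2]

theorem strip_decay_first_variable_general (u : EuclideanSpace ℝ (Fin 2) → ℝ)
    (hu : ContDiff ℝ 1 u)
    (hzero : ∀ x, x ∉ strip → u x = 0)
    (heven1 : ∀ a b : ℝ, u (pt (-a) b) = u (pt a b))
    (heven2 : ∀ a b : ℝ, u (pt a (-b)) = u (pt a b))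
    (hmono : ∀ a A b B : ℝ, 0 ≤ a → a ≤ A → 0 ≤ b → b ≤ B → B < 1 →
      u (pt A B) ≤ u (pt a b))
    (hE : IntegrableOn (fun x => ‖fderiv ℝ u x‖ ^ 2) strip) :
    ∀ a b : ℝ, a ≠ 0 → b ∈ Set.Ioo (-1 : ℝ) 1 →
      u (pt a b) ≤
        Real.sqrt (2 / |a|) * Real.sqrt (∫ x in strip, ‖fderiv ℝ u x‖ ^ 2) := by
  intro a b ha hb
  rcases le_or_gt (u (pt a b)) 0 with hneg | hpos
  · exact hneg.trans (by positivity)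
  rw [← apply_pt_abs_abs heven1 heven2] at hpos ⊢
  have hb1 : |b| < 1 := abs_lt.mpr hb
  have hkey := mul_sq_le_two_mul_integral_norm_fderiv_sq hu hzero hE (abs_nonneg a)
    ⟨by linarith [abs_nonneg b], hb1.le⟩ hpos.le
    fun t ht => hmono t |a| |b| |b| ht.1.le ht.2.le (abs_nonneg b) le_rfl hb1
  rw [← sqrt_mul (by positivity), le_sqrt hpos.le (by positivity), div_mul_eq_mul_div,
    le_div_iff₀ (abs_pos.mpr ha)]
  linarith

/-- Decay estimate in the first variable: if `u ≥ 0` is `C¹`, vanishes outside the strip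
`Ω = ℝ × (-1,1)`, is even in each variable and nonincreasing in each variable on the positive
quadrant, with finite Dirichlet energy, then for `x₁ ≠ 0`,
`u(x₁,x₂) ≤ (2/|x₁|)^{1/2} (∫_Ω |∇u|²)^{1/2}`. -/
theorem strip_decay_first_variable (u : EuclideanSpace ℝ (Fin 2) → ℝ)
    (hu : ContDiff ℝ 1 u) (hpos : ∀ x, 0 ≤ u x)
    (hzero : ∀ x, x ∉ strip → u x = 0)
    (heven1 : ∀ a b : ℝ, u (pt (-a) b) = u (pt a b))
    (heven2 : ∀ a b : ℝ, u (pt a (-b)) = u (pt a b))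
    (hmono : ∀ a A b B : ℝ, 0 ≤ a → a ≤ A → 0 ≤ b → b ≤ B → B < 1 →
      u (pt A B) ≤ u (pt a b))
    (hE : IntegrableOn (fun x => ‖fderiv ℝ u x‖ ^ 2) strip) :
    ∀ a b : ℝ, a ≠ 0 → b ∈ Set.Ioo (-1 : ℝ) 1 →
      u (pt a b) ≤
        Real.sqrt (2 / |a|) * Real.sqrt (∫ x in strip, ‖fderiv ℝ u x‖ ^ 2) :=
  strip_decay_first_variable_general u hu hzero heven1 heven2 hmono hE
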